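/- For α < 0, let B_α be the symmetric 3×3 matrix [[1,1,1],[1,1,α],[1,α,1]]. Then sup{|Σ_{j,k=1}^3 (B_α)_{jk} z_j z_k| : z ∈ ℂ³, |z_j| = 1 for all j} equals 7 + 2α if −1 < α < 0, and equals 3 − 2α if α ≤ −1. -/

import Mathlib

set_option maxHeartbeats 1000000 in
lemma gboundA' (x c K : ℝ) (hx1 : -1 ≤ x) (hx2 : x ≤ 1) (hc1 : -2 ≤ c) (hc2 : c ≤ 2)
    (hK1 : c^2-4 ≤ K) (hK2 : K ≤ c^2-2) :
    (2*x^2-1+2*c*x+K)^2 + 4*(1-x^2)*(x+c)^2 ≤ (9+K-c^2)^2 := by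
  have hc4 : c^2 ≤ 4 := by nlinarith
  have hend1 : (K+1+2*c)^2 ≤ (9+K-c^2)^2 := by
    apply sq_le_sq'
    · nlinarith [sq_nonneg (c+1)]
    · nlinarith
  have hend2 : (K+1-2*c)^2 ≤ (9+K-c^2)^2 := by
    apply sq_le_sq'
    · nlinarith [sq_nonneg (c-1)]
    · nlinarith
  rcases le_or_gt 0 (K*(1+x)+c*(1+K)) with h|h
  · linarith [hend1, mul_nonneg (by linarith : (0:ℝ) ≤ 1-x) h]
  rcases le_or_gt 0 (K*(1-x)-c*(1+K)) with h'|h'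
  · linarith [hend2, mul_nonneg (by linarith : (0:ℝ) ≤ 1+x) h']
  have hKneg : K < 0 := by nlinarith
  have hp1 : c*(1+K) < -(2*K) := by
    linarith [mul_nonneg (neg_nonneg.2 hKneg.le) (by linarith : (0:ℝ) ≤ 1 - x)]
  have hp2 : 2*K < c*(1+K) := by
    linarith [mul_nonneg (neg_nonneg.2 hKneg.le) (by linarith : (0:ℝ) ≤ 1 + x)]
  have hcond : (c*(1+K))^2 ≤ 4*K^2 := by
    nlinarith [mul_pos (by linarith : 0 < c*(1+K) - 2*K) (by linarith : 0 < -(2*K) - c*(1+K))]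
  have hq2 : (0:ℝ) ≤ K - c^2 + 4 := by linarith
  have hq3 : (0:ℝ) ≤ c^2 - K - 2 := by linarith
  have hq4 : (0:ℝ) ≤ -K := by linarith
  have hq5 : (0:ℝ) ≤ c^2 := sq_nonneg c
  have hEA : 0 ≤ -K*(c^2)^2 + K^2*c^2 + 20*K*c^2 - 20*K^2 - 80*K - c^2 := by
    rcases le_or_gt 0 ((c^2)^2 - 22*c^2 + 80 + K*(24 - 2*c^2)) with hR|hR
    · linarith [hcond, mul_nonneg hq4 hR]
    · have hq7 : (0:ℝ) ≤ -((c^2)^2 - 22*c^2 + 80 + K*(24 - 2*c^2)) := by linarith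
      linarith [mul_nonneg (mul_nonneg hq3 hq4) hq5, mul_nonneg (mul_nonneg hq3 hq5) hq7,
        mul_nonneg (mul_nonneg hq4 hq5) hq5, mul_nonneg hq2 hq2,
        mul_nonneg (mul_nonneg hq2 hq3) hq4, mul_nonneg (mul_nonneg hq2 hq2) hq4,
        mul_nonneg (mul_nonneg hq2 hq2) hq7, mul_nonneg (mul_nonneg hq2 hq3) hq7,
        mul_nonneg (mul_nonneg hq2 hq4) hq5, hq2, mul_nonneg (mul_nonneg hq2 hq5) hq7]
  by_contra hg
  push_neg at hg
  have hneg : K * ((2*x^2-1+2*c*x+K)^2 + 4*(1-x^2)*(x+c)^2 - (9+K-c^2)^2) < 0 :=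
    mul_neg_of_neg_of_pos hKneg (by linarith)
  linarith [hneg, sq_nonneg (2*K*x+c*(1+K)), hEA]

set_option maxHeartbeats 1000000 in
lemma gboundB' (x c K : ℝ) (hx1 : -1 ≤ x) (hx2 : x ≤ 1) (hc1 : -2 ≤ c) (hc2 : c ≤ 2)
    (hK1 : K ≤ c^2-4) :
    (2*x^2-1+2*c*x+K)^2 + 4*(1-x^2)*(x+c)^2 ≤ (1+c^2-K)^2 := by
  have hc4 : c^2 ≤ 4 := by nlinarith
  have hend1 : (K+1+2*c)^2 ≤ (1+c^2-K)^2 := by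
    apply sq_le_sq'
    · nlinarith [sq_nonneg (c+1)]
    · nlinarith [mul_nonneg (by linarith : (0:ℝ) ≤ c+2) (by linarith : (0:ℝ) ≤ 2-c)]
  have hend2 : (K+1-2*c)^2 ≤ (1+c^2-K)^2 := by
    apply sq_le_sq'
    · nlinarith [sq_nonneg (c-1)]
    · nlinarith [mul_nonneg (by linarith : (0:ℝ) ≤ c+2) (by linarith : (0:ℝ) ≤ 2-c)]
  rcases le_or_gt 0 (K*(1+x)+c*(1+K)) with h|h
  · linarith [hend1, mul_nonneg (by linarith : (0:ℝ) ≤ 1-x) h]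
  rcases le_or_gt 0 (K*(1-x)-c*(1+K)) with h'|h'
  · linarith [hend2, mul_nonneg (by linarith : (0:ℝ) ≤ 1+x) h']
  have hKneg : K < 0 := by nlinarith
  have hp1 : c*(1+K) < -(2*K) := by
    linarith [mul_nonneg (neg_nonneg.2 hKneg.le) (by linarith : (0:ℝ) ≤ 1 - x)]
  have hp2 : 2*K < c*(1+K) := by
    linarith [mul_nonneg (neg_nonneg.2 hKneg.le) (by linarith : (0:ℝ) ≤ 1 + x)]
  have hcond : (c*(1+K))^2 ≤ 4*K^2 := by
    nlinarith [mul_pos (by linarith : 0 < c*(1+K) - 2*K) (by linarith : 0 < -(2*K) - c*(1+K))]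
  have hclaim : 1 ≤ K^2 - K*c^2 := by
    rcases le_or_gt K (-(1/4)) with hk4|hk4
    · linarith [mul_nonneg (by linarith : (0:ℝ) ≤ -K - 1/4) (by linarith : (0:ℝ) ≤ c^2 - K - 4)]
    · exfalso
      have ht : (15:ℝ)/4 < c^2 := by linarith
      have hk1 : (9:ℝ)/16 < (1+K)^2 := by
        nlinarith [mul_pos (by linarith : (0:ℝ) < K + 1/4) (by linarith : (0:ℝ) < K + 7/4)]
      have hK2 : K^2 < 1/16 := by
        nlinarith [mul_pos (by linarith : (0:ℝ) < K + 1/4) (by linarith : (0:ℝ) < -K)]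
      nlinarith [hcond, mul_pos (by linarith : (0:ℝ) < c^2 - 15/4)
        (by linarith : (0:ℝ) < (1+K)^2 - 9/16)]
  have hEB : 0 ≤ c^2 * (K^2 - K*c^2 - 1) :=
    mul_nonneg (sq_nonneg c) (by linarith)
  by_contra hg
  push_neg at hg
  have hneg : K * ((2*x^2-1+2*c*x+K)^2 + 4*(1-x^2)*(x+c)^2 - (1+c^2-K)^2) < 0 :=
    mul_neg_of_neg_of_pos hKneg (by linarith)
  linarith [hneg, sq_nonneg (2*K*x+c*(1+K)), hEB]

open Complex in
lemma normsq_eq (w : ℂ) (c K : ℝ) (h1 : w.re^2 + w.im^2 = 1) :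
    (‖w^2 + 2*(c:ℂ)*w + (K:ℂ)‖)^2
      = (2*w.re^2-1+2*c*w.re+K)^2 + 4*(1-w.re^2)*(w.re+c)^2 := by
  have hre : (w^2 + 2*(c:ℂ)*w + (K:ℂ)).re = w.re^2 - w.im^2 + 2*c*w.re + K := by
    simp [pow_two, Complex.mul_re, Complex.mul_im]
  have him : (w^2 + 2*(c:ℂ)*w + (K:ℂ)).im = 2*w.re*w.im + 2*c*w.im := by
    simp [pow_two, Complex.mul_re, Complex.mul_im]
    ring
  rw [Complex.sq_norm, Complex.normSq_apply, hre, him]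
  linear_combination (4*(w.re+c)^2 - (w.re^2 - w.im^2 + 2*c*w.re + K)
    - (2*w.re^2 - 1 + 2*c*w.re + K)) * h1

open Complex in
lemma reduce (α : ℝ) (z : Fin 3 → ℂ) (hz : ∀ j, ‖z j‖ = 1) :
    ∃ x c : ℝ, -1 ≤ x ∧ x ≤ 1 ∧ -2 ≤ c ∧ c ≤ 2 ∧
      (‖z 0^2 + z 1^2 + z 2^2 + 2*z 0*z 1 + 2*z 0*z 2 + 2*(α:ℂ)*z 1*z 2‖)^2
        = (2*x^2-1+2*c*x+(c^2+2*α-2))^2 + 4*(1-x^2)*(x+c)^2 := by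
  have h0 : z 0 ≠ 0 := fun h => by simpa [h] using hz 0
  have h1 : z 1 ≠ 0 := fun h => by simpa [h] using hz 1
  have h2 : z 2 ≠ 0 := fun h => by simpa [h] using hz 2
  obtain ⟨s, hs⟩ := IsAlgClosed.exists_pow_nat_eq (z 1 * z 2 / (z 0)^2) (n := 2) (by norm_num)
  have habs_s : ‖s‖ = 1 := by
    have h3 : (‖s‖)^2 = 1 := by
      rw [← norm_pow, hs, norm_div, norm_mul, norm_pow, hz 0, hz 1, hz 2]; norm_num
    have h4 : (‖s‖ - 1) * (‖s‖ + 1) = 0 := by linear_combination h3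
    rcases mul_eq_zero.1 h4 with h5 | h5
    · linarith
    · linarith [norm_nonneg s]
  have hs0 : s ≠ 0 := fun h => by simp [h] at habs_s
  set m : ℂ := z 1 / (z 0 * s) with hm
  have habs_m : ‖m‖ = 1 := by
    rw [hm, norm_div, norm_mul, hz 0, hz 1, habs_s]; norm_num
  have hm0 : m ≠ 0 := fun h => by simp [h] at habs_m
  set n : ℂ := (starRingEnd ℂ) m with hn
  have hmn : m * n = 1 := by
    rw [hn, Complex.mul_conj, ← Complex.sq_norm, habs_m]; norm_num
  set w : ℂ := (starRingEnd ℂ) s with hw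
  have hsw : s * w = 1 := by
    rw [hw, Complex.mul_conj, ← Complex.sq_norm, habs_s]; norm_num
  have hz1 : z 1 = z 0 * s * m := by rw [hm]; field_simp
  have hs' : s^2 * (z 0)^2 = z 1 * z 2 := by
    field_simp at hs; linear_combination hs
  have h3 : m * z 2 = s * z 0 := by
    rw [hm]; field_simp; linear_combination -hs'
  have hz2 : z 2 = z 0 * s * n := by
    linear_combination (-(z 2)) * hmn + n * h3
  set c : ℝ := 2 * m.re with hcdef
  have hc : (c:ℂ) = m + n := by
    rw [hcdef, hn, Complex.add_conj]
  have habsw : ‖w‖ = 1 := by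
    rw [hw, Complex.norm_conj]; exact habs_s
  have hx : |w.re| ≤ 1 := by
    have := Complex.abs_re_le_norm w; rwa [habsw] at this
  have hcb : |m.re| ≤ 1 := by
    have := Complex.abs_re_le_norm m; rwa [habs_m] at this
  have h1w : w.re^2 + w.im^2 = 1 := by
    have h5 := Complex.sq_norm w
    rw [habsw, Complex.normSq_apply] at h5
    linear_combination -h5
  have key : z 0^2 + z 1^2 + z 2^2 + 2*z 0*z 1 + 2*z 0*z 2 + 2*(α:ℂ)*z 1*z 2
      = z 0^2 * s^2 * (w^2 + 2*(c:ℂ)*w + ((c^2+2*α-2 : ℝ) : ℂ)) := by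
    rw [hz1, hz2]
    push_cast
    linear_combination (-(z 0^2*(1 + s*w + 2*s*(m+n)))) * hsw
      + (z 0^2*s^2*(2*(α:ℂ)-2)) * hmn + (-(z 0^2*s^2*(2*w+(c:ℂ)+m+n))) * hc
  have habs2 : ‖z 0^2 * s^2 * (w^2 + 2*(c:ℂ)*w + ((c^2+2*α-2:ℝ):ℂ))‖
      = ‖w^2 + 2*(c:ℂ)*w + ((c^2+2*α-2:ℝ):ℂ)‖ := by
    simp [map_mul, map_pow, hz 0, habs_s]
  refine ⟨w.re, c, ?_, ?_, ?_, ?_, ?_⟩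
  · linarith [(abs_le.1 hx).1]
  · exact (abs_le.1 hx).2
  · have := (abs_le.1 hcb).1; rw [hcdef]; linarith
  · have := (abs_le.1 hcb).2; rw [hcdef]; linarith
  · rw [key, habs2, normsq_eq w c (c^2+2*α-2) h1w]


lemma sum_eq (α : ℝ) (z : Fin 3 → ℂ) :
    (∑ j, ∑ k, (!![(1:ℂ), 1, 1; 1, 1, (α:ℂ); 1, (α:ℂ), 1]) j k * z j * z k)
      = z 0^2 + z 1^2 + z 2^2 + 2*z 0*z 1 + 2*z 0*z 2 + 2*(α:ℂ)*z 1*z 2 := by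
  simp [Fin.sum_univ_three]
  ring

lemma boundA (α : ℝ) (h1 : -1 ≤ α) (h2 : α ≤ 0) (z : Fin 3 → ℂ)
    (hz : ∀ j, ‖z j‖ = 1) :
    ‖z 0^2 + z 1^2 + z 2^2 + 2*z 0*z 1 + 2*z 0*z 2 + 2*(α:ℂ)*z 1*z 2‖
      ≤ 7 + 2*α := by
  obtain ⟨x, c, hx1, hx2, hc1, hc2, heq⟩ := reduce α z hz
  have hg := gboundA' x c (c^2+2*α-2) hx1 hx2 hc1 hc2 (by linarith) (by linarith)
  have h9 : (9+(c^2+2*α-2)-c^2) = 7+2*α := by ring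
  rw [h9] at hg
  nlinarith [heq, hg, norm_nonneg (z 0^2 + z 1^2 + z 2^2 + 2*z 0*z 1 + 2*z 0*z 2 + 2*(α:ℂ)*z 1*z 2)]

lemma boundB (α : ℝ) (h1 : α ≤ -1) (z : Fin 3 → ℂ)
    (hz : ∀ j, ‖z j‖ = 1) :
    ‖z 0^2 + z 1^2 + z 2^2 + 2*z 0*z 1 + 2*z 0*z 2 + 2*(α:ℂ)*z 1*z 2‖
      ≤ 3 - 2*α := by
  obtain ⟨x, c, hx1, hx2, hc1, hc2, heq⟩ := reduce α z hz
  have hg := gboundB' x c (c^2+2*α-2) hx1 hx2 hc1 hc2 (by linarith)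
  have h9 : (1+c^2-(c^2+2*α-2)) = 3-2*α := by ring
  rw [h9] at hg
  nlinarith [heq, hg, norm_nonneg (z 0^2 + z 1^2 + z 2^2 + 2*z 0*z 1 + 2*z 0*z 2 + 2*(α:ℂ)*z 1*z 2)]

/-- Gupta–Ray, Section 3.1.  For `α < 0` and the matrix
`B_α = [[1,1,1],[1,1,α],[1,α,1]]`, the supremum on the torus of the associated homogeneous
degree-two polynomial equals `7 + 2α` when `−1 < α < 0` and `3 − 2α` when `α ≤ −1`. -/
theorem stmt17 (α : ℝ) (hα : α < 0) :
    (-1 < α →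
      sSup {r : ℝ | ∃ z : Fin 3 → ℂ, (∀ j, ‖z j‖ = 1) ∧
        r = ‖∑ j, ∑ k,
          (!![(1:ℂ), 1, 1; 1, 1, (α:ℂ); 1, (α:ℂ), 1]) j k * z j * z k‖} = 7 + 2 * α) ∧
    (α ≤ -1 →
      sSup {r : ℝ | ∃ z : Fin 3 → ℂ, (∀ j, ‖z j‖ = 1) ∧
        r = ‖∑ j, ∑ k,
          (!![(1:ℂ), 1, 1; 1, 1, (α:ℂ); 1, (α:ℂ), 1]) j k * z j * z k‖} = 3 - 2 * α) := by
  constructor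
  · intro hgt
    have hone : ∀ j, ‖(![1,1,1] : Fin 3 → ℂ) j‖ = 1 := by
      intro j; fin_cases j <;> simp
    have hmem : (7 + 2*α) ∈ {r : ℝ | ∃ z : Fin 3 → ℂ, (∀ j, ‖z j‖ = 1) ∧
        r = ‖∑ j, ∑ k,
          (!![(1:ℂ), 1, 1; 1, 1, (α:ℂ); 1, (α:ℂ), 1]) j k * z j * z k‖} := by
      refine ⟨![1,1,1], hone, ?_⟩
      rw [sum_eq α ![1,1,1]]
      have hval : ((![1,1,1] : Fin 3 → ℂ) 0)^2 + ((![1,1,1] : Fin 3 → ℂ) 1)^2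
          + ((![1,1,1] : Fin 3 → ℂ) 2)^2 + 2*(![1,1,1] : Fin 3 → ℂ) 0*(![1,1,1] : Fin 3 → ℂ) 1
          + 2*(![1,1,1] : Fin 3 → ℂ) 0*(![1,1,1] : Fin 3 → ℂ) 2
          + 2*(α:ℂ)*(![1,1,1] : Fin 3 → ℂ) 1*(![1,1,1] : Fin 3 → ℂ) 2 = ((7+2*α : ℝ) : ℂ) := by
        simp; push_cast; ring
      rw [hval, Complex.norm_real, Real.norm_eq_abs, abs_of_nonneg (by linarith)]
    apply le_antisymm
    · apply csSup_le ⟨_, hmem⟩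
      rintro r ⟨z, hz, rfl⟩
      rw [sum_eq α z]
      exact boundA α (by linarith) (by linarith) z hz
    · apply le_csSup
      · refine ⟨7+2*α, ?_⟩
        rintro r ⟨z, hz, rfl⟩
        rw [sum_eq α z]
        exact boundA α (by linarith) (by linarith) z hz
      · exact hmem
  · intro hle
    have hone : ∀ j, ‖(![1,1,-1] : Fin 3 → ℂ) j‖ = 1 := by
      intro j; fin_cases j <;> simp
    have hmem : (3 - 2*α) ∈ {r : ℝ | ∃ z : Fin 3 → ℂ, (∀ j, ‖z j‖ = 1) ∧
        r = ‖∑ j, ∑ k,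
          (!![(1:ℂ), 1, 1; 1, 1, (α:ℂ); 1, (α:ℂ), 1]) j k * z j * z k‖} := by
      refine ⟨![1,1,-1], hone, ?_⟩
      rw [sum_eq α ![1,1,-1]]
      have hval : ((![1,1,-1] : Fin 3 → ℂ) 0)^2 + ((![1,1,-1] : Fin 3 → ℂ) 1)^2
          + ((![1,1,-1] : Fin 3 → ℂ) 2)^2 + 2*(![1,1,-1] : Fin 3 → ℂ) 0*(![1,1,-1] : Fin 3 → ℂ) 1
          + 2*(![1,1,-1] : Fin 3 → ℂ) 0*(![1,1,-1] : Fin 3 → ℂ) 2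
          + 2*(α:ℂ)*(![1,1,-1] : Fin 3 → ℂ) 1*(![1,1,-1] : Fin 3 → ℂ) 2 = ((3-2*α : ℝ) : ℂ) := by
        simp; push_cast; ring
      rw [hval, Complex.norm_real, Real.norm_eq_abs, abs_of_nonneg (by linarith)]
    apply le_antisymm
    · apply csSup_le ⟨_, hmem⟩
      rintro r ⟨z, hz, rfl⟩
      rw [sum_eq α z]
      exact boundB α hle z hz
    · apply le_csSup
      · refine ⟨3-2*α, ?_⟩
        rintro r ⟨z, hz, rfl⟩
        rw [sum_eq α z]
        exact boundB α hle z hz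
      · exact hmem
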